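/- (Geometrically uniform trine states.) For x = 1, 2, 3 let |ψ_x⟩ = (cos(π(x−1)/3), sin(π(x−1)/3)) ∈ ℂ² (unit vectors whose Bloch vectors are three coplanar unit vectors at mutual angle 2π/3), and let ρ_x = |ψ_x⟩⟨ψ_x|. Then the guessing probability for the three states ρ_1, ρ_2, ρ_3 with uniform prior probabilities 1/3 equals 2/3; that is, the maximum of (1/3) Σ_{x=1}^{3} tr(M_x ρ_x) over 3-outcome POVMs (M_x) is 2/3. -/

import Mathlib

/-!
Every trine projector `ρ` satisfies `ρ ≤ 1`, since `1 - ρ` is again a pure state. Hence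
`tr (M ρ) ≤ tr M` for every positive semidefinite `M`, and for any POVM the success sum is at most
`∑ tr M_x = tr 1 = 2`. Conversely the three trine projectors sum to `(3/2) • 1`, so
`M_x = (2/3) ρ_x` is a POVM, and since `ρ_x² = ρ_x` it attains `(1/3) · 3 · (2/3) = 2/3`.
-/

open BigOperators Matrix Real
open scoped ComplexOrder

/-- An N-outcome POVM: positive semidefinite elements summing to the identity. -/
def IsPOVM {d N : ℕ} (M : Fin N → Matrix (Fin d) (Fin d) ℂ) : Prop :=
  (∀ x, (M x).PosSemidef) ∧ ∑ x, M x = 1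

/-- The pure qubit state (projector) `|ψ⟩⟨ψ|` with `|ψ⟩ = (cos a, sin a)`. -/
noncomputable def pureState (a : ℝ) : Matrix (Fin 2) (Fin 2) ℂ :=
  Matrix.vecMulVec ![(Real.cos a : ℂ), (Real.sin a : ℂ)]
    (star ![(Real.cos a : ℂ), (Real.sin a : ℂ)])

namespace Matrix

variable {n 𝕜 : Type*} [Fintype n] [RCLike 𝕜] {A B : Matrix n n 𝕜}

theorem PosSemidef.trace_mul_nonneg (hA : A.PosSemidef) (hB : B.PosSemidef) :
    0 ≤ (A * B).trace := by
  obtain ⟨m, v, rfl⟩ := posSemidef_iff_eq_sum_vecMulVec.mp hB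
  rw [Matrix.mul_sum, trace_sum]
  refine Finset.sum_nonneg fun i _ => ?_
  rw [mul_vecMulVec, trace_vecMulVec, dotProduct_comm]
  exact hA.dotProduct_mulVec_nonneg (v i)

variable [DecidableEq n]

theorem PosSemidef.trace_mul_le_trace (hA : A.PosSemidef) (hB : (1 - B).PosSemidef) :
    (A * B).trace ≤ A.trace := by
  simpa [mul_sub, trace_sub] using hA.trace_mul_nonneg hB

end Matrix

theorem IsPOVM.sum_re_trace_mul_le {d N : ℕ} {M : Fin N → Matrix (Fin d) (Fin d) ℂ}
    (hM : IsPOVM M) {ρ : Fin N → Matrix (Fin d) (Fin d) ℂ} (hρ : ∀ x, (1 - ρ x).PosSemidef) :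
    ∑ x, (M x * ρ x).trace.re ≤ d := by
  have h : ∑ x, (M x * ρ x).trace ≤ d :=
    calc ∑ x, (M x * ρ x).trace ≤ ∑ x, (M x).trace :=
          Finset.sum_le_sum fun x _ => (hM.1 x).trace_mul_le_trace (hρ x)
      _ = d := by rw [← trace_sum, hM.2, trace_one, Fintype.card_fin]
  simpa [← Complex.re_sum] using (Complex.le_def.mp h).1

theorem isPOVM_inv_smul_of_sum_eq_smul_one {d N : ℕ} {ρ : Fin N → Matrix (Fin d) (Fin d) ℂ}
    {c : ℝ} (hc : 0 < c) (hρ : ∀ x, (ρ x).PosSemidef) (hsum : ∑ x, ρ x = (c : ℂ) • 1) :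
    IsPOVM fun x => ((c⁻¹ : ℝ) : ℂ) • ρ x := by
  refine ⟨fun x => (hρ x).smul ?_, ?_⟩
  · exact_mod_cast (inv_pos.mpr hc).le
  · rw [← Finset.smul_sum, hsum, smul_smul, ← Complex.ofReal_mul, inv_mul_cancel₀ hc.ne',
      Complex.ofReal_one, one_smul]

lemma star_cos_sin_vec (a : ℝ) : star ![(cos a : ℂ), (sin a : ℂ)] = ![(cos a : ℂ), (sin a : ℂ)] := by
  ext i; fin_cases i <;> simp [-Complex.ofReal_cos, -Complex.ofReal_sin]

lemma dotProduct_cos_sin_vec_self (a : ℝ) :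
    ![(cos a : ℂ), (sin a : ℂ)] ⬝ᵥ ![(cos a : ℂ), (sin a : ℂ)] = 1 := by
  simp only [dotProduct, Fin.sum_univ_two, cons_val_zero, cons_val_one, ← sq]
  exact_mod_cast cos_sq_add_sin_sq a

lemma pureState_eq_of (a : ℝ) : pureState a =
    !![(cos a : ℂ) ^ 2, cos a * sin a; cos a * sin a, (sin a : ℂ) ^ 2] := by
  ext i j
  fin_cases i <;> fin_cases j <;>
    simp [pureState, vecMulVec_apply, sq, mul_comm, -Complex.ofReal_cos, -Complex.ofReal_sin]

lemma pureState_posSemidef (a : ℝ) : (pureState a).PosSemidef :=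
  posSemidef_vecMulVec_self_star _

lemma pureState_trace (a : ℝ) : (pureState a).trace = 1 := by
  rw [pureState, trace_vecMulVec, star_cos_sin_vec, dotProduct_cos_sin_vec_self]

lemma pureState_mul_self (a : ℝ) : pureState a * pureState a = pureState a := by
  rw [pureState, vecMulVec_mul_vecMulVec, star_cos_sin_vec, dotProduct_cos_sin_vec_self, one_smul]

lemma one_sub_pureState (a : ℝ) : 1 - pureState a = pureState (a + π / 2) := by
  have h : (cos a : ℂ) ^ 2 + (sin a : ℂ) ^ 2 = 1 := by exact_mod_cast cos_sq_add_sin_sq a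
  rw [pureState_eq_of, pureState_eq_of, cos_add_pi_div_two, sin_add_pi_div_two]
  ext i j
  fin_cases i <;> fin_cases j <;> simp [-Complex.ofReal_cos, -Complex.ofReal_sin]
  · linear_combination -h
  · ring
  · ring
  · linear_combination -h

lemma posSemidef_one_sub_pureState (a : ℝ) : (1 - pureState a).PosSemidef :=
  one_sub_pureState a ▸ pureState_posSemidef _

lemma sum_trine_pureState :
    ∑ x : Fin 3, pureState ((x : ℕ) * π / 3) = ((3 / 2 : ℝ) : ℂ) • 1 := by
  have htwo_thirds : 2 * π / 3 = π - π / 3 := by ring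
  have hsqrt3 : ((√3 : ℝ) : ℂ) ^ 2 = 3 := by exact_mod_cast sq_sqrt (by norm_num : (0 : ℝ) ≤ 3)
  simp only [Fin.sum_univ_three, pureState_eq_of, Fin.val_zero, Fin.val_one, Fin.val_two]
  ext i j
  fin_cases i <;> fin_cases j <;>
    simp [htwo_thirds, cos_pi_div_three, sin_pi_div_three, -Complex.ofReal_cos, -Complex.ofReal_sin]
  · norm_num
  · linear_combination hsqrt3 / 2

/-- geometrically uniform trine states: for the three trine states
`|ψ_x⟩ = (cos(π(x−1)/3), sin(π(x−1)/3))`, `x = 1, 2, 3`, with uniform priors `1/3`,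
the guessing probability equals `2/3`. -/
theorem trine_states_guessing_probability :
    IsGreatest {v : ℝ | ∃ M : Fin 3 → Matrix (Fin 2) (Fin 2) ℂ, IsPOVM M ∧
        v = ∑ x : Fin 3, (1 / 3 : ℝ) *
          ((M x * pureState ((x : ℕ) * Real.pi / 3)).trace).re}
      (2 / 3) := by
  refine ⟨⟨_, isPOVM_inv_smul_of_sum_eq_smul_one (by norm_num) (fun _ => pureState_posSemidef _)
    sum_trine_pureState, ?_⟩, ?_⟩
  · simp [pureState_mul_self, pureState_trace]
  · rintro v ⟨M, hM, rfl⟩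
    have h := hM.sum_re_trace_mul_le fun x => posSemidef_one_sub_pureState ((x : ℕ) * π / 3)
    rw [← Finset.mul_sum]
    push_cast at h
    linarith
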